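/- arXiv:2508.10154 — 3 statements merged into one kernel-verified Lean document; each statement's English description precedes it below -/
import Mathlib

section
/- For all real t and ν, |tanh(t + ν) - tanh(ν)| ≤ ((1 + tanh(|ν|)) / (1 + |ν|)) * |t|, and consequently |tanh(t + ν) - tanh(ν)| ≤ 2|t| / (1 + |ν|). -/
open Real

/-!
Writing `tanh x = (e^{2x} - 1) / (e^{2x} + 1)` gives
`tanh (t + ν) - tanh ν = (1 + tanh ν) (e^{2t} - 1) / (e^{2t+2ν} + 1)`, so the bound for `ν > -1`
amounts to `(2 + w) |e^u - 1| ≤ |u| (e^{u+w} + 1)` with `u = 2t`, `w = 2ν`. For `a ≥ 0` the function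
`F a = a (e^a + e^w) - (2 + w) (e^a - 1)` vanishes at `0` and has `F' a = e^w - (1 + w - a) e^a ≥ 0`
by `1 + y ≤ e^y`; the case `u < 0` is `F (-u) ≥ 0` multiplied by `e^u`, and the case `u ≥ 0` is
`F u ≥ 0` with `w` replaced by `w + u`. Negative `ν` reduce to positive ones since `tanh` is odd.
-/

theorem two_add_mul_exp_sub_one_le (w : ℝ) {a : ℝ} (ha : 0 ≤ a) :
    (2 + w) * (exp a - 1) ≤ a * (exp a + exp w) := by
  set F : ℝ → ℝ := fun a ↦ a * (exp a + exp w) - (2 + w) * (exp a - 1)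
  have hF (x : ℝ) : HasDerivAt F (exp w - (1 + (w - x)) * exp x) x := by
    refine (((hasDerivAt_id' x).mul ((hasDerivAt_exp x).add_const (exp w))).sub
      (((hasDerivAt_exp x).sub_const 1).const_mul (2 + w))).congr_deriv ?_
    ring
  have hF' (x : ℝ) : 0 ≤ deriv F x := by
    rw [(hF x).deriv, sub_nonneg, ← sub_add_cancel w x, exp_add, add_sub_cancel_right]
    exact mul_le_mul_of_nonneg_right (by linarith [add_one_le_exp (w - x)]) (exp_pos x).le
  simpa [F] using monotone_of_deriv_nonneg (fun x ↦ (hF x).differentiableAt) hF' ha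

theorem two_add_mul_abs_exp_sub_one_le (u w : ℝ) :
    (2 + w) * |exp u - 1| ≤ |u| * (exp (u + w) + 1) := by
  rcases le_total 0 u with hu | hu
  · have := two_add_mul_exp_sub_one_le (u + w) hu
    rw [abs_of_nonneg (by simpa using hu), abs_of_nonneg hu]
    linarith
  · have hinv : exp u * exp (-u) = 1 := by rw [← exp_add, add_neg_cancel, exp_zero]
    rw [abs_of_nonpos (by simpa using hu), abs_of_nonpos hu, exp_add]
    calc (2 + w) * -(exp u - 1) = exp u * ((2 + w) * (exp (-u) - 1)) := by
          linear_combination (-(2 + w)) * hinv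
      _ ≤ exp u * (-u * (exp (-u) + exp w)) :=
          mul_le_mul_of_nonneg_left (two_add_mul_exp_sub_one_le w (neg_nonneg.2 hu)) (exp_pos u).le
      _ = -u * (exp u * exp w + 1) := by linear_combination (-u) * hinv

theorem tanh_eq_exp_two_mul (x : ℝ) : tanh x = (exp (2 * x) - 1) / (exp (2 * x) + 1) := by
  rw [tanh_eq, two_mul, exp_add, exp_neg]
  field_simp

theorem tanh_add_sub_tanh (t ν : ℝ) :
    tanh (t + ν) - tanh ν = (1 + tanh ν) * (exp (2 * t) - 1) / (exp (2 * t + 2 * ν) + 1) := by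
  rw [tanh_eq_exp_two_mul, tanh_eq_exp_two_mul, mul_add, exp_add]
  field_simp
  ring

theorem abs_tanh_add_sub_tanh_le (t : ℝ) {ν : ℝ} (hν : -1 < ν) :
    |tanh (t + ν) - tanh ν| ≤ (1 + tanh ν) / (1 + ν) * |t| := by
  have hnum : 0 < 1 + tanh ν := by linarith [neg_one_lt_tanh ν]
  have hden : 0 < exp (2 * t + 2 * ν) + 1 := by positivity
  have hratio : |exp (2 * t) - 1| / (exp (2 * t + 2 * ν) + 1) ≤ |t| / (1 + ν) := by
    rw [div_le_div_iff₀ hden (by linarith)]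
    have := two_add_mul_abs_exp_sub_one_le (2 * t) (2 * ν)
    rw [abs_mul, abs_two] at this
    linarith
  rw [tanh_add_sub_tanh, abs_div, abs_mul, abs_of_pos hnum, abs_of_pos hden, mul_div_assoc,
    div_mul_eq_mul_div, mul_div_assoc]
  exact mul_le_mul_of_nonneg_left hratio hnum.le

theorem tanh_shift_lipschitz_bound (t ν : ℝ) :
    |Real.tanh (t + ν) - Real.tanh ν| ≤ ((1 + Real.tanh |ν|) / (1 + |ν|)) * |t| ∧
      |Real.tanh (t + ν) - Real.tanh ν| ≤ 2 * |t| / (1 + |ν|) := by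
  have hbound : |tanh (t + ν) - tanh ν| ≤ (1 + tanh |ν|) / (1 + |ν|) * |t| := by
    rcases le_total 0 ν with hν | hν
    · rw [abs_of_nonneg hν]
      exact abs_tanh_add_sub_tanh_le t (by linarith)
    · have := abs_tanh_add_sub_tanh_le (-t) (ν := -ν) (by linarith)
      rw [abs_of_nonpos hν, tanh_neg]
      rwa [← neg_add, tanh_neg (t + ν), tanh_neg ν, neg_sub_neg, abs_sub_comm, abs_neg] at this
  refine ⟨hbound, hbound.trans ?_⟩
  rw [div_mul_eq_mul_div]
  gcongr
  linarith [tanh_lt_one |ν|]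
end

section
/- Let X be a real random variable with symmetric probability density f(x) = K₀(|x|)/π. Define n(α, ν) := E[tanh(αX + ν)] and let β := tanh(ν). Then n(α, ν) = β · E[ (1 - tanh(αX)²) / (1 - β² tanh(αX)²) ]. -/
/-!
Since the density is even, `n(α, ν)` equals the integral of the symmetrization
`(tanh (ν + αx) + tanh (ν - αx)) / 2` against it, and the addition formula for `tanh` turns this
into `β (1 - tanh² αx) / (1 - β² tanh² αx)`. The only analytic input is integrability of the
density, which follows from Tonelli on `K₀(|x|) = ∫₀^∞ exp (-|x| cosh t) dt`: the `x`-integral is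
`2 / cosh t`, integrable on `(0, ∞)`.
-/

open Real MeasureTheory

/-- Modified Bessel function of the second kind of order 0, via its integral
representation `K₀(x) = ∫₀^∞ exp(-x cosh t) dt`. -/
noncomputable def besselK0 (x : ℝ) : ℝ :=
  ∫ t in Set.Ioi (0 : ℝ), Real.exp (-x * Real.cosh t)

/-- The probability density `x ↦ K₀(|x|)/π` on ℝ. -/
noncomputable def besselDensity (x : ℝ) : ℝ := besselK0 |x| / Real.pi

open Set Filter

namespace Real

theorem tanh_add (x y : ℝ) : tanh (x + y) = (tanh x + tanh y) / (1 + tanh x * tanh y) := by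
  have hx := (cosh_pos x).ne'
  have hy := (cosh_pos y).ne'
  have hxy : cosh x * cosh y + sinh x * sinh y ≠ 0 := cosh_add x y ▸ (cosh_pos _).ne'
  simp only [tanh_eq_sinh_div_cosh, sinh_add, cosh_add]
  field_simp

theorem tanh_add_add_tanh_sub (a b : ℝ) :
    tanh (b + a) + tanh (b - a) = 2 * tanh b * (1 - tanh a ^ 2) / (1 - tanh b ^ 2 * tanh a ^ 2) := by
  have hab : |tanh b * tanh a| < 1 := by
    rw [abs_mul]; exact mul_lt_one_of_nonneg_of_lt_one_left (abs_nonneg _)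
      (abs_tanh_lt_one b) (abs_tanh_lt_one a).le
  obtain ⟨h₁, h₂⟩ := abs_lt.mp hab
  have hd₁ : 1 + tanh b * tanh a ≠ 0 := by linarith
  have hd₂ : 1 - tanh b * tanh a ≠ 0 := by linarith
  have hd : 1 - tanh b ^ 2 * tanh a ^ 2 ≠ 0 := by
    rw [show 1 - tanh b ^ 2 * tanh a ^ 2 = (1 + tanh b * tanh a) * (1 - tanh b * tanh a) by ring]
    exact mul_ne_zero hd₁ hd₂
  rw [sub_eq_add_neg, tanh_add, tanh_add, tanh_neg, mul_neg, ← sub_eq_add_neg, ← sub_eq_add_neg,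
    div_add_div _ _ hd₁ hd₂, div_eq_div_iff (mul_ne_zero hd₁ hd₂) hd]
  ring

@[fun_prop]
theorem continuous_tanh : Continuous tanh := by
  simp_rw [funext tanh_eq_sinh_div_cosh]
  exact continuous_sinh.div continuous_cosh fun x => (cosh_pos x).ne'

theorem inv_cosh_le_two_mul_exp_neg (t : ℝ) : (cosh t)⁻¹ ≤ 2 * exp (-t) := by
  have h : exp t * exp (-t) = 1 := by rw [← exp_add, add_neg_cancel, exp_zero]
  rw [inv_le_iff_one_le_mul₀ (cosh_pos t), cosh_eq]
  nlinarith [exp_pos (-t)]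

end Real

theorem integral_eq_integral_half_add_comp_neg {f : ℝ → ℝ} (hf : Integrable f) :
    ∫ x, f x = ∫ x, (f x + f (-x)) / 2 := by
  rw [integral_div, integral_add hf hf.comp_neg, integral_neg_eq_self, add_self_div_two]

theorem integral_tanh_mul_eq_of_even {ρ : ℝ → ℝ} (hρ : Integrable ρ) (heven : ∀ x, ρ (-x) = ρ x)
    (α ν : ℝ) :
    ∫ x, tanh (α * x + ν) * ρ x =
      tanh ν * ∫ x, ((1 - tanh (α * x) ^ 2) / (1 - tanh ν ^ 2 * tanh (α * x) ^ 2)) * ρ x := by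
  have hint : Integrable fun x => tanh (α * x + ν) * ρ x :=
    hρ.bdd_mul (c := 1) (by fun_prop) (Eventually.of_forall fun x => (abs_tanh_lt_one _).le)
  rw [integral_eq_integral_half_add_comp_neg hint, ← integral_const_mul]
  congr 1 with x
  rw [heven, mul_neg, add_comm _ ν, add_comm _ ν, ← sub_eq_add_neg, ← add_mul,
    tanh_add_add_tanh_sub]
  ring

theorem integrable_comp_abs_of_integrableOn_Ioi {E : Type*} [NormedAddCommGroup E] {f : ℝ → E}
    (hf : IntegrableOn f (Ioi 0)) :
    Integrable fun x => f |x| := by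
  have hIoi : IntegrableOn (fun x => f |x|) (Ioi 0) :=
    hf.congr_fun (fun x hx => by rw [abs_of_pos hx]) measurableSet_Ioi
  have hIic : IntegrableOn (fun x => f |x|) (Iic 0) := by
    have hneg : MeasurableEmbedding fun x : ℝ => -x := (Homeomorph.neg ℝ).measurableEmbedding
    rw [← Measure.map_neg_eq_self (volume : Measure ℝ), hneg.integrableOn_map_iff]
    simp_rw [Function.comp_def, abs_neg, neg_preimage, neg_Iic, neg_zero]
    exact (integrableOn_Ici_iff_integrableOn_Ioi).mpr hIoi
  rw [← integrableOn_univ, ← Iic_union_Ioi (a := (0 : ℝ))]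
  exact hIic.union hIoi

theorem integrable_exp_neg_mul_abs {c : ℝ} (hc : 0 < c) :
    Integrable fun x : ℝ => exp (-c * |x|) :=
  integrable_comp_abs_of_integrableOn_Ioi (f := fun x => exp (-c * x))
    (exp_neg_integrableOn_Ioi 0 hc)

theorem integral_exp_neg_mul_abs {c : ℝ} (hc : 0 < c) :
    ∫ x : ℝ, exp (-c * |x|) = 2 * c⁻¹ := by
  have h := integral_comp_mul_left_Ioi (fun x => exp (-x)) 0 hc
  simp only [mul_zero, integral_exp_neg_Ioi, neg_zero, exp_zero, smul_eq_mul, mul_one] at h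
  rw [integral_comp_abs (f := fun x => exp (-c * x))]
  simp_rw [neg_mul, h]

theorem integrable_exp_neg_abs_mul_cosh :
    Integrable (fun p : ℝ × ℝ => exp (-|p.1| * cosh p.2))
      ((volume : Measure ℝ).prod (volume.restrict (Ioi 0))) := by
  have hslice (t : ℝ) : (fun x : ℝ => exp (-|x| * cosh t)) = fun x => exp (-cosh t * |x|) := by
    simp_rw [neg_mul, mul_comm]
  rw [integrable_prod_iff' (by fun_prop)]
  refine ⟨Eventually.of_forall fun t => hslice t ▸ integrable_exp_neg_mul_abs (cosh_pos t), ?_⟩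
  simp_rw [norm_of_nonneg (exp_pos _).le, hslice, integral_exp_neg_mul_abs (cosh_pos _)]
  refine (((exp_neg_integrableOn_Ioi 0 one_pos).const_mul 4)).mono' (by fun_prop)
    (Eventually.of_forall fun t => ?_)
  rw [norm_of_nonneg (by positivity), neg_one_mul]
  linarith [inv_cosh_le_two_mul_exp_neg t]

theorem integrable_besselDensity : Integrable besselDensity :=
  integrable_exp_neg_abs_mul_cosh.integral_prod_left.div_const π

theorem besselDensity_neg (x : ℝ) : besselDensity (-x) = besselDensity x := by
  rw [besselDensity, besselDensity, abs_neg]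

theorem bessel_n_identity (α ν : ℝ) :
    (∫ x : ℝ, Real.tanh (α * x + ν) * besselDensity x) =
      Real.tanh ν *
        ∫ x : ℝ, ((1 - Real.tanh (α * x) ^ 2) / (1 - Real.tanh ν ^ 2 * Real.tanh (α * x) ^ 2)) *
          besselDensity x :=
  integral_tanh_mul_eq_of_even integrable_besselDensity besselDensity_neg α ν
end

section
/- Let Pₙ be the sequence of polynomials defined by P₀(t) = t and Pₙ₊₁(t) = (1 - t²) · Pₙ'(t). Then for every n ≥ 0: Pₙ has integer coefficients, Pₙ(tanh z) equals the n-th derivative of tanh at z for all real z, deg(Pₙ) = n + 1, and max over t ∈ [-1, 1] of |Pₙ(t)| is at most n!. -/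
/-!
Since `tanh' = 1 - tanh²`, differentiating `Pₙ ∘ tanh` gives `(Pₙ' ∘ tanh) · (1 - tanh²)`, which is
`Pₙ₊₁ ∘ tanh`; this yields the derivative formula, and integrality and the degree follow from the
recursion. For the bound, `Pₙ(tanh x)` is the `n`-th derivative of the holomorphic function `tanh`
at the real point `x`. On the disc of radius `6/5 < π/2` about `x` we have
`|tanh w| ≤ 1 / cos (Im w) ≤ 1 / cos (6/5)`, so Cauchy's estimate gives
`|Pₙ(tanh x)| ≤ n! / (cos (6/5) · (6/5)ⁿ) ≤ n!` once `n ≥ 6`. As `tanh` maps `ℝ` onto `(-1, 1)`,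
continuity extends the bound to `[-1, 1]`. The cases `n ≤ 5` are checked on the explicit polynomials.
-/

open Polynomial

noncomputable def tanhDerivPoly (R : Type*) [CommRing R] : ℕ → R[X]
  | 0 => X
  | n + 1 => (1 - X ^ 2) * derivative (tanhDerivPoly R n)

section Algebra

variable {R S : Type*} [CommRing R] [CommRing S]

theorem tanhDerivPoly_zero : tanhDerivPoly R 0 = X := rfl

theorem tanhDerivPoly_succ (n : ℕ) :
    tanhDerivPoly R (n + 1) = (1 - X ^ 2) * derivative (tanhDerivPoly R n) := rfl

theorem eq_tanhDerivPoly {P : ℕ → R[X]} (h0 : P 0 = X)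
    (hsucc : ∀ n, P (n + 1) = (1 - X ^ 2) * derivative (P n)) : P = tanhDerivPoly R := by
  funext n
  induction n with
  | zero => exact h0
  | succ n ih => rw [hsucc, ih, tanhDerivPoly_succ]

theorem map_tanhDerivPoly (f : R →+* S) (n : ℕ) :
    (tanhDerivPoly R n).map f = tanhDerivPoly S n := by
  induction n with
  | zero => simp [tanhDerivPoly_zero]
  | succ n ih => simp [tanhDerivPoly_succ, ← derivative_map, ih]

theorem natDegree_tanhDerivPoly [IsDomain R] [CharZero R] (n : ℕ) :
    (tanhDerivPoly R n).natDegree = n + 1 := by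
  induction n with
  | zero => simp [tanhDerivPoly_zero]
  | succ n ih =>
    have h2 : (1 - X ^ 2 : R[X]).natDegree = 2 := by compute_degree!
    rw [tanhDerivPoly_succ, natDegree_mul (by rintro h; simp [h] at h2) (by simp [ih]), h2,
      natDegree_derivative, ih]
    omega

end Algebra

theorem iteratedDeriv_eq_eval_tanhDerivPoly {𝕜 : Type*} [NontriviallyNormedField 𝕜]
    {f : 𝕜 → 𝕜} {U : Set 𝕜} (hU : IsOpen U) (hf : ∀ z ∈ U, HasDerivAt f (1 - f z ^ 2) z)
    (n : ℕ) : ∀ z ∈ U, iteratedDeriv n f z = (tanhDerivPoly 𝕜 n).eval (f z) := by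
  induction n with
  | zero => simp [tanhDerivPoly_zero]
  | succ n ih =>
    intro z hz
    have hU_eq : iteratedDeriv n f =ᶠ[nhds z] fun w => (tanhDerivPoly 𝕜 n).eval (f w) :=
      Filter.eventuallyEq_of_mem (hU.mem_nhds hz) ih
    have hderiv : HasDerivAt (fun w => (tanhDerivPoly 𝕜 n).eval (f w))
        ((derivative (tanhDerivPoly 𝕜 n)).eval (f z) * (1 - f z ^ 2)) z :=
      ((tanhDerivPoly 𝕜 n).hasDerivAt (f z)).comp z (hf z hz)
    rw [iteratedDeriv_succ, hU_eq.deriv_eq, hderiv.deriv, tanhDerivPoly_succ]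
    simp only [eval_mul, eval_sub, eval_one, eval_pow, eval_X]
    ring

theorem Complex.hasDerivAt_tanh {z : ℂ} (hz : Complex.cosh z ≠ 0) :
    HasDerivAt Complex.tanh (1 - Complex.tanh z ^ 2) z := by
  have h := (Complex.hasDerivAt_sinh z).div (Complex.hasDerivAt_cosh z) hz
  rw [show Complex.tanh = Complex.sinh / Complex.cosh from funext Complex.tanh_eq_sinh_div_cosh]
  refine h.congr_deriv ?_
  rw [Pi.div_apply]
  field_simp

theorem Real.hasDerivAt_tanh (x : ℝ) : HasDerivAt Real.tanh (1 - Real.tanh x ^ 2) x := by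
  have h := (Complex.hasDerivAt_tanh (z := x) (mod_cast (Real.cosh_pos x).ne')).real_of_complex
  simpa [← Complex.ofReal_tanh, ← Complex.ofReal_pow, ← Complex.ofReal_one,
    ← Complex.ofReal_sub] using h

theorem Complex.cosh_eq_re_add_im_mul_I (w : ℂ) :
    Complex.cosh w = (Real.cosh w.re * Real.cos w.im : ℝ)
      + (Real.sinh w.re * Real.sin w.im : ℝ) * Complex.I := by
  conv_lhs => rw [← Complex.re_add_im w]
  rw [Complex.cosh_add, Complex.cosh_mul_I, Complex.sinh_mul_I]
  push_cast
  ring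

theorem Complex.sinh_eq_re_add_im_mul_I (w : ℂ) :
    Complex.sinh w = (Real.sinh w.re * Real.cos w.im : ℝ)
      + (Real.cosh w.re * Real.sin w.im : ℝ) * Complex.I := by
  conv_lhs => rw [← Complex.re_add_im w]
  rw [Complex.sinh_add, Complex.cosh_mul_I, Complex.sinh_mul_I]
  push_cast
  ring

theorem Complex.normSq_cosh (w : ℂ) :
    Complex.normSq (Complex.cosh w) = Real.sinh w.re ^ 2 + Real.cos w.im ^ 2 := by
  rw [Complex.cosh_eq_re_add_im_mul_I, Complex.normSq_add_mul_I]
  linear_combination Real.cos w.im ^ 2 * Real.cosh_sq w.re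
    + Real.sinh w.re ^ 2 * Real.sin_sq_add_cos_sq w.im

theorem Complex.normSq_sinh (w : ℂ) :
    Complex.normSq (Complex.sinh w) = Real.sinh w.re ^ 2 + Real.sin w.im ^ 2 := by
  rw [Complex.sinh_eq_re_add_im_mul_I, Complex.normSq_add_mul_I]
  linear_combination Real.sin w.im ^ 2 * Real.cosh_sq w.re
    + Real.sinh w.re ^ 2 * Real.sin_sq_add_cos_sq w.im

theorem Complex.cosh_ne_zero_of_abs_im_lt {w : ℂ} (hw : |w.im| < Real.pi / 2) :
    Complex.cosh w ≠ 0 := by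
  have hcos : 0 < Real.cos w.im := Real.cos_pos_of_mem_Ioo (abs_lt.mp hw)
  rw [← Complex.normSq_pos, Complex.normSq_cosh]
  positivity

theorem Complex.norm_tanh_mul_cos_im_le_one {w : ℂ} (hw : |w.im| < Real.pi / 2) :
    ‖Complex.tanh w‖ * Real.cos w.im ≤ 1 := by
  have hcos : 0 < Real.cos w.im := Real.cos_pos_of_mem_Ioo (abs_lt.mp hw)
  have hcosh : 0 < ‖Complex.cosh w‖ := norm_pos_iff.mpr (Complex.cosh_ne_zero_of_abs_im_lt hw)
  have hsq : (‖Complex.sinh w‖ * Real.cos w.im) ^ 2 ≤ ‖Complex.cosh w‖ ^ 2 := by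
    rw [mul_pow, Complex.sq_norm, Complex.sq_norm, Complex.normSq_sinh, Complex.normSq_cosh]
    nlinarith [Real.sin_sq_add_cos_sq w.im, Real.cos_sq_le_one w.im, sq_nonneg (Real.sinh w.re),
      sq_nonneg (Real.cos w.im)]
  rw [Complex.tanh_eq_sinh_div_cosh, norm_div, div_mul_eq_mul_div, div_le_one hcosh]
  exact (pow_le_pow_iff_left₀ (by positivity) hcosh.le two_ne_zero).mp hsq

theorem one_le_cos_six_fifths_mul_pow : 1 ≤ Real.cos (6 / 5) * (6 / 5) ^ 6 := by
  have hcos : 41 / 50 ≤ Real.cos (3 / 5) := by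
    have := Real.one_sub_sq_div_two_le_cos (x := 3 / 5)
    norm_num at this ⊢
    linarith
  have hdouble : Real.cos (6 / 5) = 2 * Real.cos (3 / 5) ^ 2 - 1 := by
    rw [← Real.cos_two_mul]
    norm_num
  rw [hdouble]
  nlinarith

theorem iteratedDeriv_real_tanh (n : ℕ) (x : ℝ) :
    iteratedDeriv n Real.tanh x = (tanhDerivPoly ℝ n).eval (Real.tanh x) :=
  iteratedDeriv_eq_eval_tanhDerivPoly isOpen_univ (fun x _ => Real.hasDerivAt_tanh x) n x trivial

theorem iteratedDeriv_complex_tanh (n : ℕ) {w : ℂ} (hw : |w.im| < Real.pi / 2) :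
    iteratedDeriv n Complex.tanh w = (tanhDerivPoly ℂ n).eval (Complex.tanh w) :=
  iteratedDeriv_eq_eval_tanhDerivPoly
    (isOpen_lt (continuous_abs.comp Complex.continuous_im) continuous_const)
    (fun _ hz => Complex.hasDerivAt_tanh (Complex.cosh_ne_zero_of_abs_im_lt hz)) n w hw

theorem Complex.ofReal_iteratedDeriv_tanh (n : ℕ) (x : ℝ) :
    ((iteratedDeriv n Real.tanh x : ℝ) : ℂ) = iteratedDeriv n Complex.tanh x := by
  rw [iteratedDeriv_complex_tanh n (by simpa using Real.pi_pos), iteratedDeriv_real_tanh,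
    ← map_tanhDerivPoly Complex.ofRealHom, eval_map, ← Complex.ofReal_tanh]
  exact (eval₂_at_apply Complex.ofRealHom _).symm

open Metric in
theorem abs_iteratedDeriv_tanh_le_factorial {n : ℕ} (hn : 6 ≤ n) (x : ℝ) :
    |iteratedDeriv n Real.tanh x| ≤ n.factorial := by
  have hR : (6 / 5 : ℝ) < Real.pi / 2 := by linarith [Real.pi_gt_three]
  have hpos : 0 < Real.cos (6 / 5) := Real.cos_pos_of_mem_Ioo ⟨by linarith, hR⟩
  have him : ∀ w ∈ closedBall (x : ℂ) (6 / 5), |w.im| ≤ 6 / 5 := fun w hw => by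
    simpa using (Complex.abs_im_le_norm (w - x)).trans (mem_closedBall_iff_norm.mp hw)
  have hdiff : DifferentiableOn ℂ Complex.tanh {w : ℂ | |w.im| < Real.pi / 2} := fun w hw =>
    (Complex.hasDerivAt_tanh (Complex.cosh_ne_zero_of_abs_im_lt hw)).differentiableAt
      |>.differentiableWithinAt
  have hbound : ∀ w ∈ sphere (x : ℂ) (6 / 5), ‖Complex.tanh w‖ ≤ 1 / Real.cos (6 / 5) := by
    intro w hw
    have hw' := him w (sphere_subset_closedBall hw)
    have hcos : Real.cos (6 / 5) ≤ Real.cos w.im := by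
      rw [← Real.cos_abs w.im]
      exact Real.cos_le_cos_of_nonneg_of_le_pi (abs_nonneg _) (by linarith [Real.pi_gt_three]) hw'
    rw [le_div_iff₀ hpos]
    calc ‖Complex.tanh w‖ * Real.cos (6 / 5) ≤ ‖Complex.tanh w‖ * Real.cos w.im := by gcongr
      _ ≤ 1 := Complex.norm_tanh_mul_cos_im_le_one (hw'.trans_lt hR)
  have hcauchy := Complex.norm_iteratedDeriv_le_of_forall_mem_sphere_norm_le n (by norm_num)
    (hdiff.diffContOnCl_ball fun w hw => (him w hw).trans_lt hR) hbound
  rw [← Complex.ofReal_iteratedDeriv_tanh, Complex.norm_real, Real.norm_eq_abs] at hcauchy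
  refine hcauchy.trans ?_
  have hpow : 1 ≤ Real.cos (6 / 5) * (6 / 5) ^ n :=
    one_le_cos_six_fifths_mul_pow.trans (by gcongr; norm_num)
  rw [mul_one_div, div_div, div_le_iff₀ (by positivity)]
  exact le_mul_of_one_le_right (by positivity) hpow

theorem abs_eval_tanhDerivPoly_le_factorial_of_le_five {n : ℕ} (hn : n ≤ 5) {t : ℝ}
    (ht : t ∈ Set.Icc (-1 : ℝ) 1) : |(tanhDerivPoly ℝ n).eval t| ≤ n.factorial := by
  have hu : 0 ≤ 1 - t ^ 2 := by nlinarith [ht.1, ht.2]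
  have hs : 0 ≤ t ^ 2 := sq_nonneg t
  rw [abs_le]
  interval_cases n <;> simp [tanhDerivPoly, Nat.factorial] <;> ring_nf <;> constructor <;>
    nlinarith [ht.1, ht.2, mul_nonneg hu hs, mul_nonneg (mul_nonneg hu hs) hs]

theorem abs_eval_tanhDerivPoly_le_factorial (n : ℕ) {t : ℝ} (ht : t ∈ Set.Icc (-1 : ℝ) 1) :
    |(tanhDerivPoly ℝ n).eval t| ≤ n.factorial := by
  rcases le_or_gt n 5 with hn | hn
  · exact abs_eval_tanhDerivPoly_le_factorial_of_le_five hn ht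
  have hIoo : ∀ s ∈ Set.Ioo (-1 : ℝ) 1, |(tanhDerivPoly ℝ n).eval s| ≤ n.factorial := by
    intro s hs
    obtain ⟨x, -, rfl⟩ := Real.tanh_surjOn hs
    rw [← iteratedDeriv_real_tanh]
    exact abs_iteratedDeriv_tanh_le_factorial hn x
  have hclosed : IsClosed {t | |(tanhDerivPoly ℝ n).eval t| ≤ n.factorial} :=
    isClosed_le (tanhDerivPoly ℝ n).continuous.abs continuous_const
  rw [← closure_Ioo (by norm_num : (-1 : ℝ) ≠ 1)] at ht
  exact closure_minimal hIoo hclosed ht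

theorem derivative_polynomials_tanh (P : ℕ → Polynomial ℝ)
    (hP0 : P 0 = Polynomial.X)
    (hPrec : ∀ n, P (n + 1) = (1 - Polynomial.X ^ 2) * Polynomial.derivative (P n)) :
    ∀ n : ℕ,
      (∀ i : ℕ, ∃ k : ℤ, (P n).coeff i = (k : ℝ)) ∧
      (∀ z : ℝ, (P n).eval (Real.tanh z) = iteratedDeriv n Real.tanh z) ∧
      (P n).natDegree = n + 1 ∧
      (∀ t : ℝ, t ∈ Set.Icc (-1 : ℝ) 1 → |(P n).eval t| ≤ (Nat.factorial n : ℝ)) := by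
  obtain rfl : P = tanhDerivPoly ℝ := eq_tanhDerivPoly hP0 hPrec
  intro n
  refine ⟨fun i => ⟨(tanhDerivPoly ℤ n).coeff i, ?_⟩, fun z => (iteratedDeriv_real_tanh n z).symm,
    natDegree_tanhDerivPoly n, fun t ht => abs_eval_tanhDerivPoly_le_factorial n ht⟩
  rw [← map_tanhDerivPoly (Int.castRingHom ℝ), coeff_map, eq_intCast]
end
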